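/- Let h ∈ C((0,∞), ℝ) satisfy ∫₀^∞ s |h(s)| ds < ∞, ∫₀^∞ |h(s)| ds < ∞, and the reflection identity h(1/t) = −t·h(t) for all t > 0. For suitable integrable functions φ : [0,∞) → ℝ and v : (−∞,0] → ℝ (bounded, with the relevant double integrals absolutely convergent), define ε⁻v(t) = ∫₀^∞ h(s) v(−st) ds for t ≥ 0 and εφ(τ) = ∫₀^∞ h(σ) φ(−στ) dσ for τ ≤ 0. Then ∫₀^∞ φ(t) · ε⁻v(t) dt = −∫_{−∞}^0 (εφ)(τ) · v(τ) dτ. -/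

import Mathlib

/-!
Both sides are integrals of one function over a quarter plane, by Fubini. The substitution
`(t, s) ↦ (τ, σ) = (-(s * t), s⁻¹)` maps `(0, ∞)²` bijectively onto `(-∞, 0) × (0, ∞)` with
Jacobian `s⁻¹`, and the reflection identity `h(1/s) = -s h(s)` makes the transformed integrand
of the right-hand side equal to minus that of the left-hand side.
-/

open MeasureTheory Set

namespace ReflectionKernel

noncomputable def negMulInv (p : ℝ × ℝ) : ℝ × ℝ := (-(p.2 * p.1), p.2⁻¹)

noncomputable def negMulInvFDeriv (p : ℝ × ℝ) : ℝ × ℝ →L[ℝ] ℝ × ℝ :=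
  LinearMap.toContinuousLinearMap
    (Matrix.toLin (Module.Basis.finTwoProd ℝ) (Module.Basis.finTwoProd ℝ)
      !![-p.2, -p.1; 0, -(p.2 ^ 2)⁻¹])

lemma hasFDerivAt_negMulInv {p : ℝ × ℝ} (hp : p.2 ≠ 0) :
    HasFDerivAt negMulInv (negMulInvFDeriv p) p := by
  rw [negMulInvFDeriv, Matrix.toLin_finTwoProd_toContinuousLinearMap]
  refine ((hasFDerivAt_snd.mul hasFDerivAt_fst).neg.prodMk
    ((hasDerivAt_inv hp).comp_hasFDerivAt p hasFDerivAt_snd)).congr_fderiv ?_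
  ext <;> simp [neg_smul]

lemma hasFDerivWithinAt_negMulInv {p : ℝ × ℝ} (hp : p ∈ Ioi (0 : ℝ) ×ˢ Ioi 0) :
    HasFDerivWithinAt negMulInv (negMulInvFDeriv p) (Ioi 0 ×ˢ Ioi 0) p :=
  (hasFDerivAt_negMulInv (ne_of_gt hp.2)).hasFDerivWithinAt

lemma det_negMulInvFDeriv {p : ℝ × ℝ} (hp : p.2 ≠ 0) : (negMulInvFDeriv p).det = p.2⁻¹ := by
  simp only [negMulInvFDeriv, LinearMap.det_toContinuousLinearMap, LinearMap.det_toLin,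
    Matrix.det_fin_two_of]
  field_simp
  ring

lemma injOn_negMulInv : InjOn negMulInv (Ioi 0 ×ˢ Ioi 0) := by
  rintro ⟨t, s⟩ ⟨-, hs⟩ ⟨t', s'⟩ - hE
  obtain ⟨hst, hss'⟩ := Prod.mk.inj hE
  obtain rfl : s = s' := inv_injective hss'
  simp only [neg_inj] at hst
  rw [mul_left_cancel₀ (ne_of_gt hs) hst]

lemma image_negMulInv : negMulInv '' (Ioi 0 ×ˢ Ioi 0) = Iio 0 ×ˢ Ioi 0 := by
  ext q
  constructor
  · rintro ⟨⟨t, s⟩, ⟨ht : 0 < t, hs : 0 < s⟩, rfl⟩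
    exact ⟨neg_neg_of_pos (mul_pos hs ht), inv_pos.mpr hs⟩
  · rintro ⟨hτ : q.1 < 0, hσ : 0 < q.2⟩
    refine ⟨(-(q.1 * q.2), q.2⁻¹), ⟨neg_pos.mpr (mul_neg_of_neg_of_pos hτ hσ), inv_pos.mpr hσ⟩, ?_⟩
    ext
    · simp only [negMulInv]
      field_simp
    · exact inv_inv _

variable {E : Type*} [NormedAddCommGroup E] [NormedSpace ℝ E]

lemma abs_det_negMulInvFDeriv_smul_eqOn (g : ℝ × ℝ → E) :
    EqOn (fun p => |(negMulInvFDeriv p).det| • g (negMulInv p))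
      (fun p => p.2⁻¹ • g (negMulInv p)) (Ioi 0 ×ˢ Ioi 0) := by
  rintro p ⟨-, hp : 0 < p.2⟩
  simp only [det_negMulInvFDeriv hp.ne', abs_of_pos (inv_pos.mpr hp)]

theorem integrableOn_Iio_prod_Ioi_iff (g : ℝ × ℝ → E) :
    IntegrableOn g (Iio 0 ×ˢ Ioi 0) ↔
      IntegrableOn (fun p => p.2⁻¹ • g (negMulInv p)) (Ioi 0 ×ˢ Ioi 0) := by
  rw [← image_negMulInv, integrableOn_image_iff_integrableOn_abs_det_fderiv_smul volume
    (measurableSet_Ioi.prod measurableSet_Ioi) (fun _ => hasFDerivWithinAt_negMulInv)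
    injOn_negMulInv]
  exact integrableOn_congr_fun (abs_det_negMulInvFDeriv_smul_eqOn g)
    (measurableSet_Ioi.prod measurableSet_Ioi)

theorem setIntegral_Iio_prod_Ioi_eq (g : ℝ × ℝ → E) :
    ∫ q in Iio 0 ×ˢ Ioi 0, g q = ∫ p in Ioi 0 ×ˢ Ioi 0, p.2⁻¹ • g (negMulInv p) := by
  rw [← image_negMulInv, integral_image_eq_integral_abs_det_fderiv_smul volume
    (measurableSet_Ioi.prod measurableSet_Ioi) (fun _ => hasFDerivWithinAt_negMulInv)
    injOn_negMulInv]
  exact setIntegral_congr_fun (measurableSet_Ioi.prod measurableSet_Ioi)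
    (abs_det_negMulInvFDeriv_smul_eqOn g)

end ReflectionKernel

open ReflectionKernel

theorem stmt_16_general (h : ℝ → ℝ)
    (hrefl : ∀ t : ℝ, 0 < t → h (1 / t) = -t * h t)
    (φ v : ℝ → ℝ)
    (hprod : IntegrableOn
      (fun p : ℝ × ℝ => φ p.1 * (h p.2 * v (-(p.2 * p.1))))
      (Set.Ioi 0 ×ˢ Set.Ioi 0)) :
    ∫ t in Set.Ioi (0 : ℝ), φ t * ∫ s in Set.Ioi (0 : ℝ), h s * v (-(s * t)) =
      -∫ τ in Set.Iio (0 : ℝ),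
        (∫ σ in Set.Ioi (0 : ℝ), h σ * φ (-(σ * τ))) * v τ := by
  set f : ℝ × ℝ → ℝ := fun p => φ p.1 * (h p.2 * v (-(p.2 * p.1)))
  set G : ℝ × ℝ → ℝ := fun q => h q.2 * φ (-(q.2 * q.1)) * v q.1
  have hGf : EqOn (fun p => p.2⁻¹ • G (negMulInv p)) (-f) (Ioi 0 ×ˢ Ioi 0) := by
    rintro ⟨t, s⟩ ⟨-, hs : 0 < s⟩
    have hinv : s⁻¹ * h s⁻¹ = -h s := by
      rw [← one_div, hrefl s hs]; field_simp
    simp only [G, f, negMulInv, smul_eq_mul, Pi.neg_apply]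
    rw [show -(s⁻¹ * -(s * t)) = t by field_simp]
    linear_combination φ t * v (-(s * t)) * hinv
  have hG : IntegrableOn G (Iio 0 ×ˢ Ioi 0) := by
    rw [integrableOn_Iio_prod_Ioi_iff]
    exact hprod.neg.congr_fun hGf.symm (measurableSet_Ioi.prod measurableSet_Ioi)
  calc ∫ t in Ioi 0, φ t * ∫ s in Ioi 0, h s * v (-(s * t))
      = ∫ p in Ioi 0 ×ˢ Ioi 0, f p := by
        rw [Measure.volume_eq_prod, setIntegral_prod f hprod]
        simp only [f, integral_const_mul]
    _ = -∫ q in Iio 0 ×ˢ Ioi 0, G q := by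
        rw [setIntegral_Iio_prod_Ioi_eq, setIntegral_congr_fun
          (measurableSet_Ioi.prod measurableSet_Ioi) hGf, Pi.neg_def, integral_neg, neg_neg]
    _ = -∫ τ in Iio 0, (∫ σ in Ioi 0, h σ * φ (-(σ * τ))) * v τ := by
        rw [Measure.volume_eq_prod, setIntegral_prod G hG]
        simp only [G, integral_mul_const]

/-- Duality identity for the extension kernels: if `h ∈ C((0,∞))` satisfies
`∫₀^∞ |h| < ∞`, `∫₀^∞ s|h(s)| ds < ∞` and `h(1/t) = −t·h(t)`, and the double
integral is absolutely convergent, then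
`∫₀^∞ φ(t)·ε⁻v(t) dt = −∫_{−∞}^0 (εφ)(τ)·v(τ) dτ`, where
`ε⁻v(t) = ∫₀^∞ h(s) v(−st) ds` and `εφ(τ) = ∫₀^∞ h(σ) φ(−στ) dσ`. -/
theorem stmt_16 (h : ℝ → ℝ) (hcont : ContinuousOn h (Set.Ioi 0))
    (hint : IntegrableOn h (Set.Ioi 0))
    (hint' : IntegrableOn (fun s => s * h s) (Set.Ioi 0))
    (hrefl : ∀ t : ℝ, 0 < t → h (1 / t) = -t * h t)
    (φ v : ℝ → ℝ) (hφ : Measurable φ) (hv : Measurable v)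
    (hprod : IntegrableOn
      (fun p : ℝ × ℝ => φ p.1 * (h p.2 * v (-(p.2 * p.1))))
      (Set.Ioi 0 ×ˢ Set.Ioi 0)) :
    ∫ t in Set.Ioi (0 : ℝ), φ t * ∫ s in Set.Ioi (0 : ℝ), h s * v (-(s * t)) =
      -∫ τ in Set.Iio (0 : ℝ),
        (∫ σ in Set.Ioi (0 : ℝ), h σ * φ (-(σ * τ))) * v τ :=
  stmt_16_general h hrefl φ v hprod
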